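/- Let ψ : B → ℂ be a unital algebra homomorphism. The formulas (d_n ⊗ b) · v_k = ψ(b)(α + k + nβ) v_{k+n} and (C ⊗ b) · v_k = 0 define a Vir_B-module structure on V_{α,β} = ⊕_{k∈ℤ} ℂ v_k; moreover, if V_{α,β} is irreducible as a Vir-module then it is irreducible as a Vir_B-module. -/
import Mathlib


open Finsupp TensorProduct

noncomputable section

/-- Loop-Virasoro carrier: `Vir ⊗ B ≅ (⊕_{n∈ℤ} d_n ⊗ B) ⊕ (C ⊗ B)`. -/
abbrev LVir (B : Type*) [AddCommMonoid B] : Type _ := (ℤ →₀ B) × B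

variable (B : Type*) [CommRing B] [Algebra ℂ B]

/-- `[d_m ⊗ a, d_n ⊗ b] = (n-m) d_{m+n} ⊗ ab + δ_{m,-n} ((m³-m)/12) C ⊗ ab`. -/
def ldBracket (m n : ℤ) (a b : B) : LVir B :=
  (Finsupp.single (m + n) ((((n : ℂ) - (m : ℂ))) • (a * b)),
    (if m = -n then ((m : ℂ) ^ 3 - (m : ℂ)) / 12 else 0) • (a * b))

/-- The bracket of the loop-Virasoro algebra `Vir_B = Vir ⊗ B`; `C ⊗ B` is central. -/
def lvirBracket (x y : LVir B) : LVir B :=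
  x.1.sum fun m a => y.1.sum fun n b => ldBracket B m n a b

/-- Action of `d_n` on `V_{α,β}`: `d_n · v_k = (α + k + nβ) v_{k+n}`. -/
def dAct (α β : ℂ) (n : ℤ) : Module.End ℂ (ℤ →₀ ℂ) :=
  Finsupp.lsum ℂ fun k => (α + (k : ℂ) + (n : ℂ) * β) • Finsupp.lsingle (k + n)

/-- The action of the Virasoro algebra (`= Vir ⊗ ℂ`) on `V_{α,β}`: it suffices to record
the action of each `d_n`; `C` acts by zero. -/
def vabAction (α β : ℂ) : (ℤ →₀ ℂ) × ℂ →ₗ[ℂ] Module.End ℂ (ℤ →₀ ℂ) :=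
  (Finsupp.lsum ℂ fun n =>
    LinearMap.toSpanSingleton ℂ (Module.End ℂ (ℤ →₀ ℂ)) (dAct α β n)).comp
    (LinearMap.fst ℂ (ℤ →₀ ℂ) ℂ)

/-- The action of `Vir_B` on `V_{α,β,ψ}`. -/
def lAction (α β : ℂ) (ψ : B →ₐ[ℂ] ℂ) : LVir B →ₗ[ℂ] Module.End ℂ (ℤ →₀ ℂ) :=
  (Finsupp.lsum ℂ fun n =>
      (LinearMap.toSpanSingleton ℂ (Module.End ℂ (ℤ →₀ ℂ)) (dAct α β n)).comp ψ.toLinearMap).comp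
    (LinearMap.fst ℂ (ℤ →₀ B) B)

def ActInvariant {L V : Type*} [AddCommGroup V] [Module ℂ V]
    (act : L → Module.End ℂ V) (U : Submodule ℂ V) : Prop :=
  ∀ x : L, ∀ v ∈ U, act x v ∈ U

def ActIrreducible {L V : Type*} [AddCommGroup V] [Module ℂ V]
    (act : L → Module.End ℂ V) : Prop :=
  ∀ U : Submodule ℂ V, ActInvariant act U → U = ⊥ ∨ U = ⊤


section Aux

variable (B : Type*) [CommRing B] [Algebra ℂ B]

lemma endSum_sub {ι : Type*} (s : Finset ι) (f g : ι → Module.End ℂ (ℤ →₀ ℂ)) :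
    (∑ i ∈ s, f i) - ∑ i ∈ s, g i = ∑ i ∈ s, (f i - g i) := by
  classical
  induction s using Finset.induction with
  | empty => rw [Finset.sum_empty, Finset.sum_empty, Finset.sum_empty]; abel
  | @insert a s h ih =>
    rw [Finset.sum_insert h, Finset.sum_insert h, Finset.sum_insert h, ← ih]
    abel

lemma dAct_single (α β : ℂ) (n k : ℤ) (c : ℂ) :
    dAct α β n (Finsupp.single k c) = (c * (α + (k : ℂ) + (n : ℂ) * β)) • Finsupp.single (k + n) 1 := by
  rw [dAct, Finsupp.lsum_apply, Finsupp.sum_single_index (by simp)]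
  simp only [LinearMap.smul_apply, Finsupp.lsingle_apply, Finsupp.smul_single, smul_eq_mul, mul_one]
  rw [mul_comm]

lemma dAct_comm (α β : ℂ) (m n : ℤ) :
    dAct α β m * dAct α β n - dAct α β n * dAct α β m
      = (((n : ℂ) - (m : ℂ))) • dAct α β (m + n) := by
  apply Finsupp.lhom_ext (M := ℂ) (fun k c => ?_)
  simp only [LinearMap.sub_apply, Module.End.mul_apply, LinearMap.smul_apply,
    dAct_single, map_smul]
  simp only [one_mul, smul_smul]
  rw [show k + n + m = k + (m + n) by ring, show k + m + n = k + (m + n) by ring,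
    ← sub_smul]
  congr 1
  push_cast
  ring

lemma lAction_apply (α β : ℂ) (ψ : B →ₐ[ℂ] ℂ) (x : LVir B) :
    lAction B α β ψ x = x.1.sum fun n b => ψ b • dAct α β n := by
  simp [lAction, Finsupp.lsum_apply, LinearMap.toSpanSingleton_apply, Function.comp]
  rfl

lemma lAction_single (α β : ℂ) (ψ : B →ₐ[ℂ] ℂ) (n : ℤ) (b : B) (e : B) :
    lAction B α β ψ (Finsupp.single n b, e) = ψ b • dAct α β n := by
  rw [lAction_apply]
  exact Finsupp.sum_single_index (by simp)

lemma vabAction_apply (α β : ℂ) (x : (ℤ →₀ ℂ) × ℂ) :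
    vabAction α β x = x.1.sum fun n c => c • dAct α β n := by
  simp [vabAction, Finsupp.lsum_apply, LinearMap.toSpanSingleton_apply, Function.comp]
  rfl

end Aux

/-- For a unital algebra homomorphism `ψ : B → ℂ`, the formulas
`(d_n ⊗ b) · v_k = ψ(b)(α + k + nβ) v_{k+n}` and `(C ⊗ b) · v_k = 0` define a
`Vir_B`-module structure on `V_{α,β}` (the linear map `lAction` sends brackets to
commutators and acts by these formulas); moreover if `V_{α,β}` is irreducible as a
`Vir`-module then it is irreducible as a `Vir_B`-module. -/
theorem lAction_is_module (α β : ℂ) (ψ : B →ₐ[ℂ] ℂ) :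
    (∀ x y : LVir B,
      lAction B α β ψ (lvirBracket B x y)
        = lAction B α β ψ x * lAction B α β ψ y - lAction B α β ψ y * lAction B α β ψ x) ∧
    (∀ (n k : ℤ) (b : B),
      lAction B α β ψ (Finsupp.single n b, 0) (Finsupp.single k 1)
        = (ψ b * (α + (k : ℂ) + (n : ℂ) * β)) • Finsupp.single (k + n) 1) ∧
    (∀ (k : ℤ) (b : B), lAction B α β ψ (0, b) (Finsupp.single k 1) = 0) ∧
    (ActIrreducible (fun x => vabAction α β x) →
      ActIrreducible (fun x : LVir B => lAction B α β ψ x)) := by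
  have key : ∀ x y : LVir B,
      lAction B α β ψ (lvirBracket B x y)
        = lAction B α β ψ x * lAction B α β ψ y - lAction B α β ψ y * lAction B α β ψ x := by
    intro x y
    rw [lvirBracket, map_finsuppSum]
    simp only [map_finsuppSum]
    rw [lAction_apply B α β ψ x, lAction_apply B α β ψ y]
    simp only [Finsupp.sum_mul, Finsupp.mul_sum]
    rw [Finsupp.sum_comm y.1 x.1 (fun n b m a => (ψ a • dAct α β m) * (ψ b • dAct α β n))]
    rw [Finsupp.sum, Finsupp.sum, Finsupp.sum, endSum_sub]
    refine Finset.sum_congr rfl fun m _ => ?_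
    rw [Finsupp.sum, Finsupp.sum, Finsupp.sum, endSum_sub]
    refine Finset.sum_congr rfl fun n _ => ?_
    rw [ldBracket, lAction_single]
    rw [map_smul, smul_assoc, map_mul]
    rw [smul_mul_smul_comm, smul_mul_smul_comm, mul_comm (ψ _) (ψ _)]
    rw [smul_comm, ← dAct_comm]
    module
  refine ⟨key, ?_, ?_, ?_⟩
  · intro n k b
    rw [lAction_single, LinearMap.smul_apply, dAct_single]
    rw [smul_smul, one_mul]
  · intro k b
    have h0 : ((0 : ℤ →₀ B), b) = (Finsupp.single 0 (0 : B), b) := by simp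
    rw [h0, lAction_single]
    simp
  · intro hirr U hU
    refine hirr U ?_
    intro x v hv
    have hd : ∀ n : ℤ, dAct α β n v ∈ U := by
      intro n
      have h := hU (Finsupp.single n (1 : B), 0) v hv
      simp only [lAction_single, map_one, one_smul] at h
      exact h
    show vabAction α β x v ∈ U
    rw [vabAction_apply, Finsupp.sum, LinearMap.sum_apply]
    exact Submodule.sum_mem U fun n _ => Submodule.smul_mem U _ (hd n)
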